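/- arXiv:1411.6867 — 3 statements merged into one kernel-verified Lean document; each statement's English description precedes it below -/
import Mathlib

section
/- Let K ⊆ ℝⁿ be compact, μ a finite Borel measure with support K, and f continuous on ℝⁿ. Then f is nonnegative on K if and only if ∫_K g² f dμ ≥ 0 for every polynomial g. -/
/-!
Nonnegativity of the integrals is trivial when `f ≥ 0` on `K`. Conversely, uniform approximation of
a continuous `φ` by polynomials on `K` (Stone–Weierstrass) and bounded convergence give
`∫_K φ² f dμ ≥ 0` for every continuous `φ`. Taking `φ = √(f⁻)` turns the integrand into
`-(f⁻)²`, so the continuous function `(f⁻)²` has integral zero and therefore vanishes on the support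
of `μ`, which is `K`.
-/

open MeasureTheory Filter Topology

theorem Real.sqrt_negPart_sq_mul_self (a : ℝ) : √(a⁻) ^ 2 * a = -(a⁻ ^ 2) := by
  rw [Real.sq_sqrt (negPart_nonneg a)]
  rcases le_total 0 a with ha | ha
  · simp [negPart_eq_zero.2 ha]
  · rw [negPart_eq_neg.2 ha]
    ring

theorem Continuous.eqOn_support_of_ae_eq {X Y : Type*} [TopologicalSpace X] [MeasurableSpace X]
    [TopologicalSpace Y] [T2Space Y] {μ : Measure X} {f g : X → Y} (hf : Continuous f)
    (hg : Continuous g) (h : f =ᵐ[μ] g) : Set.EqOn f g μ.support := by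
  intro x hx
  by_contra hne
  exact Measure.subset_compl_support_of_isOpen (isClosed_eq hf hg).isOpen_compl (ae_iff.1 h) hne hx

section SetIntegral

variable {X : Type*} [TopologicalSpace X] [T2Space X] [MeasurableSpace X] [OpensMeasurableSpace X]
  {μ : Measure X} [IsFiniteMeasureOnCompacts μ] {K : Set X} {f : X → ℝ}

theorem nonneg_of_mem_support_of_forall_setIntegral_sq_mul_nonneg (hK : IsCompact K)
    (hf : Continuous f) (h : ∀ φ : X → ℝ, Continuous φ → 0 ≤ ∫ x in K, φ x ^ 2 * f x ∂μ)
    {x : X} (hx : x ∈ (μ.restrict K).support) : 0 ≤ f x := by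
  have hcont : Continuous fun y => (f y)⁻ ^ 2 := (continuous_negPart.comp hf).pow 2
  have hzero : ∫ y in K, (f y)⁻ ^ 2 ∂μ = 0 := by
    refine le_antisymm ?_ (integral_nonneg fun y => sq_nonneg _)
    have := h (fun y => √(f y)⁻) (continuous_negPart.comp hf).sqrt
    simpa only [Real.sqrt_negPart_sq_mul_self, integral_neg, neg_nonneg] using this
  have hae : (fun y => (f y)⁻ ^ 2) =ᵐ[μ.restrict K] 0 :=
    (integral_eq_zero_iff_of_nonneg (fun y => sq_nonneg _)
      (hcont.continuousOn.integrableOn_compact hK)).1 hzero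
  have hfx : (f x)⁻ ^ 2 = 0 := hcont.eqOn_support_of_ae_eq continuous_const hae hx
  exact negPart_eq_zero.1 (pow_eq_zero_iff two_ne_zero |>.1 hfx)

theorem TendstoUniformlyOn.tendsto_setIntegral_sq_mul {ι : Type*} {l : Filter ι}
    [l.IsCountablyGenerated] {F : ι → X → ℝ} {φ : X → ℝ} (hK : IsCompact K)
    (hf : ContinuousOn f K) (hφ : ContinuousOn φ K) (hF : ∀ i, ContinuousOn (F i) K)
    (hlim : TendstoUniformlyOn F φ l K) :
    Tendsto (fun i => ∫ x in K, F i x ^ 2 * f x ∂μ) l (𝓝 (∫ x in K, φ x ^ 2 * f x ∂μ)) := by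
  have : IsFiniteMeasure (μ.restrict K) := isFiniteMeasure_restrict.2 hK.measure_lt_top.ne
  have hKm : MeasurableSet K := hK.measurableSet
  obtain ⟨B, hB⟩ := hK.exists_bound_of_continuousOn hφ
  obtain ⟨M, hM⟩ := hK.exists_bound_of_continuousOn hf
  refine tendsto_integral_filter_of_norm_le_const
    (Eventually.of_forall fun i => (((hF i).pow 2).mul hf).aestronglyMeasurable hKm)
    ⟨(B + 1) ^ 2 * M, ?_⟩ ((ae_restrict_iff' hKm).2 <| .of_forall fun x hx =>
      ((hlim.tendsto_at hx).pow 2).mul_const (f x))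
  filter_upwards [Metric.tendstoUniformlyOn_iff.1 hlim 1 one_pos] with i hi
  refine (ae_restrict_iff' hKm).2 <| .of_forall fun x hx => ?_
  have hFx : ‖F i x‖ ≤ B + 1 := by
    linarith [norm_le_norm_add_norm_sub' (F i x) (φ x), hB x hx,
      dist_eq_norm' (φ x) (F i x) ▸ hi x hx]
  rw [norm_mul, norm_pow]
  gcongr
  exact hM x hx

end SetIntegral

section MvPolynomialEval

variable (ι : Type*)

noncomputable def mvPolynomialEvalAlgHom : MvPolynomial ι ℝ →ₐ[ℝ] C(EuclideanSpace ℝ ι, ℝ) :=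
  MvPolynomial.aeval fun i => (EuclideanSpace.proj i : EuclideanSpace ℝ ι →L[ℝ] ℝ)

variable {ι}

theorem mvPolynomialEvalAlgHom_apply (p : MvPolynomial ι ℝ) (x : EuclideanSpace ℝ ι) :
    mvPolynomialEvalAlgHom ι p x = MvPolynomial.eval (fun i => x i) p := by
  rw [← MvPolynomial.coe_aeval_eq_eval]
  exact congrArg (· p) (MvPolynomial.comp_aeval _ (ContinuousMap.evalAlgHom ℝ ℝ x))

theorem mvPolynomialEvalAlgHom_range_separatesPoints :
    (mvPolynomialEvalAlgHom ι).range.SeparatesPoints := by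
  intro x y hxy
  obtain ⟨i, hi⟩ : ∃ i, x i ≠ y i := by
    by_contra! h
    exact hxy (PiLp.ext h)
  exact ⟨_, ⟨_, (AlgHom.mem_range _).2 ⟨MvPolynomial.X i, MvPolynomial.aeval_X _ i⟩, rfl⟩, hi⟩

theorem exists_tendstoUniformlyOn_eval_mvPolynomial {K : Set (EuclideanSpace ℝ ι)}
    (hK : IsCompact K) {φ : EuclideanSpace ℝ ι → ℝ} (hφ : Continuous φ) :
    ∃ p : ℕ → MvPolynomial ι ℝ,
      TendstoUniformlyOn (fun k x => MvPolynomial.eval (fun i => x i) (p k)) φ atTop K := by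
  have hnear (k : ℕ) : ∃ p : MvPolynomial ι ℝ,
      ∀ x ∈ K, dist (φ x) (MvPolynomial.eval (fun i => x i) p) < 1 / (k + 1) := by
    obtain ⟨g, hgA, hg⟩ :=
      ContinuousMap.exists_mem_subalgebra_near_continuous_of_isCompact_of_separatesPoints
        mvPolynomialEvalAlgHom_range_separatesPoints ⟨φ, hφ⟩ hK Nat.one_div_pos_of_nat
    obtain ⟨p, rfl⟩ := (AlgHom.mem_range _).1 hgA
    refine ⟨p, fun x hx => ?_⟩
    rw [dist_comm, dist_eq_norm, ← mvPolynomialEvalAlgHom_apply]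
    exact hg x hx
  choose p hp using hnear
  refine ⟨p, Metric.tendstoUniformlyOn_iff.2 fun ε hε => ?_⟩
  obtain ⟨N, hN⟩ := exists_nat_one_div_lt hε
  filter_upwards [eventually_ge_atTop N] with k hk x hx
  exact (hp k x hx).trans_le ((Nat.one_div_le_one_div hk).trans hN.le)

end MvPolynomialEval

theorem nonneg_iff_sos_integrals_nonneg (n : ℕ)
    (K : Set (EuclideanSpace ℝ (Fin n))) (hK : IsCompact K)
    (μ : Measure (EuclideanSpace ℝ (Fin n))) [IsFiniteMeasure μ]
    (hsupp : ∀ x, x ∈ K ↔ ∀ U : Set (EuclideanSpace ℝ (Fin n)),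
      IsOpen U → x ∈ U → 0 < μ U)
    (f : EuclideanSpace ℝ (Fin n) → ℝ) (hf : Continuous f) :
    (∀ x ∈ K, 0 ≤ f x) ↔
      ∀ g : MvPolynomial (Fin n) ℝ,
        0 ≤ ∫ x in K, (MvPolynomial.eval (fun i => x i) g) ^ 2 * f x ∂μ := by
  have hsupport : μ.support = K := by
    ext x
    rw [hsupp, Measure.support_eq_forall_isOpen]
    exact forall_congr' fun U => imp.swap
  have hrestrict : μ.restrict K = μ :=
    Measure.restrict_eq_self_of_ae_mem (hsupport ▸ Measure.support_mem_ae)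
  constructor
  · intro hpos g
    exact setIntegral_nonneg hK.measurableSet fun x hx => mul_nonneg (sq_nonneg _) (hpos x hx)
  · intro hpoly x hx
    refine nonneg_of_mem_support_of_forall_setIntegral_sq_mul_nonneg hK hf (fun φ hφ => ?_)
      (by rwa [hrestrict, hsupport])
    obtain ⟨p, hp⟩ := exists_tendstoUniformlyOn_eval_mvPolynomial hK hφ
    have hpcont (k : ℕ) : Continuous fun x : EuclideanSpace ℝ (Fin n) =>
        MvPolynomial.eval (fun i => x i) (p k) :=
      (MvPolynomial.continuous_eval _).comp (PiLp.continuous_ofLp 2 _)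
    exact ge_of_tendsto' (hp.tendsto_setIntegral_sq_mul hK hf.continuousOn hφ.continuousOn
      fun k => (hpcont k).continuousOn) fun k => hpoly (p k)
end

section
/- If a set K ⊆ ℝⁿ satisfies an interior cone condition with angle θ ∈ (0, π/2) and radius ρ > 0, then for every a ∈ K and every ε with 0 < ε ≤ ρ, vol(B_ε(a) ∩ K) ≥ (sin θ/(1+sin θ))ⁿ · vol(B_ε(a)). -/
/-!
Fix `a ∈ K` with cone axis `ξ`, and put `h = ε / (1 + sin θ)`. The ball of radius `h sin θ`
about `a + h ξ` lies inside the cone at `a`, since each of its points `a + v` satisfies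
`2h⟪v, ξ⟫ ≥ ‖v‖² + h² cos² θ ≥ 2h ‖v‖ cos θ`, and it also lies in `B_ε(a)`.
Its radius is `ε sin θ / (1 + sin θ)`, so by scaling of Lebesgue measure its volume is
`(sin θ / (1 + sin θ))ⁿ vol(B_ε(a))`.
-/

open MeasureTheory Metric RealInnerProductSpace

section Cone

variable {E : Type*} [NormedAddCommGroup E] [InnerProductSpace ℝ E]

/-- The cone `C(x, ξ, θ, ρ)` of the interior cone condition. -/
def finiteCone (x ξ : E) (θ ρ : ℝ) : Set E :=
  {p | ∃ y : E, ∃ lam : ℝ, ‖y‖ = 1 ∧ Real.cos θ ≤ ⟪y, ξ⟫ ∧ lam ∈ Set.Icc 0 ρ ∧ p = x + lam • y}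

theorem add_mem_finiteCone {x ξ v : E} {θ ρ : ℝ} (hξ : ‖ξ‖ = 1) (hvρ : ‖v‖ ≤ ρ)
    (hv : ‖v‖ * Real.cos θ ≤ ⟪v, ξ⟫) : x + v ∈ finiteCone x ξ θ ρ := by
  rcases eq_or_ne v 0 with rfl | hv0
  · refine ⟨ξ, 0, hξ, ?_, ⟨le_rfl, by simpa using hvρ⟩, by simp⟩
    rw [real_inner_self_eq_norm_sq, hξ, one_pow]
    exact Real.cos_le_one θ
  · have hpos : 0 < ‖v‖ := norm_pos_iff.2 hv0
    refine ⟨‖v‖⁻¹ • v, ‖v‖, norm_smul_inv_norm hv0, ?_, ⟨norm_nonneg v, hvρ⟩, ?_⟩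
    · rw [real_inner_smul_left, le_inv_mul_iff₀ hpos]
      exact hv
    · rw [smul_inv_smul₀ hpos.ne']

theorem norm_mul_cos_le_inner_of_norm_sub_le {v ξ : E} {h θ : ℝ} (hξ : ‖ξ‖ = 1) (hh : 0 < h)
    (hv : ‖v - h • ξ‖ ≤ h * Real.sin θ) : ‖v‖ * Real.cos θ ≤ ⟪v, ξ⟫ := by
  have hexpand : ‖v - h • ξ‖ ^ 2 = ‖v‖ ^ 2 - 2 * h * ⟪v, ξ⟫ + h ^ 2 := by
    rw [norm_sub_sq_real, real_inner_smul_right, norm_smul, hξ, Real.norm_eq_abs, abs_of_pos hh]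
    ring
  have hsq : ‖v - h • ξ‖ ^ 2 ≤ (h * Real.sin θ) ^ 2 := pow_le_pow_left₀ (norm_nonneg _) hv 2
  have hamgm : 2 * h * (‖v‖ * Real.cos θ) ≤ ‖v‖ ^ 2 + h ^ 2 * Real.cos θ ^ 2 := by
    nlinarith [sq_nonneg (‖v‖ - h * Real.cos θ)]
  have hpyth := Real.sin_sq_add_cos_sq θ
  nlinarith

theorem closedBall_subset_finiteCone {x ξ : E} {h θ ρ : ℝ} (hξ : ‖ξ‖ = 1) (hh : 0 ≤ h)
    (hhρ : h * (1 + Real.sin θ) ≤ ρ) :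
    closedBall (x + h • ξ) (h * Real.sin θ) ⊆ finiteCone x ξ θ ρ := by
  intro p hp
  have hdist : ‖(p - x) - h • ξ‖ ≤ h * Real.sin θ := by
    rwa [sub_sub, ← dist_eq_norm]
  have hnorm : ‖p - x‖ ≤ h * (1 + Real.sin θ) := by
    calc ‖p - x‖ ≤ ‖(p - x) - h • ξ‖ + ‖h • ξ‖ := norm_le_norm_sub_add _ _
      _ ≤ h * Real.sin θ + h := by
        rw [norm_smul, hξ, Real.norm_eq_abs, abs_of_nonneg hh, mul_one]
        gcongr
      _ = h * (1 + Real.sin θ) := by ring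
  have hinner : ‖p - x‖ * Real.cos θ ≤ ⟪p - x, ξ⟫ := by
    rcases hh.eq_or_lt with rfl | hh
    · have : p = x := by simpa using hp
      simp [this]
    · exact norm_mul_cos_le_inner_of_norm_sub_le hξ hh hdist
  simpa using add_mem_finiteCone (x := x) hξ (hnorm.trans hhρ) hinner

end Cone

theorem interior_cone_condition_volume_bound_general (n : ℕ)
    (K : Set (EuclideanSpace ℝ (Fin n)))
    (θ ρ : ℝ) (hθ : θ ∈ Set.Ioo 0 (Real.pi / 2))
    (hcone : ∀ x ∈ K, ∃ ξ : EuclideanSpace ℝ (Fin n), ‖ξ‖ = 1 ∧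
      {p : EuclideanSpace ℝ (Fin n) |
        ∃ y : EuclideanSpace ℝ (Fin n), ∃ lam : ℝ,
          ‖y‖ = 1 ∧ Real.cos θ ≤ ⟪y, ξ⟫ ∧ lam ∈ Set.Icc 0 ρ ∧ p = x + lam • y} ⊆ K) :
    ∀ a ∈ K, ∀ ε : ℝ, 0 < ε → ε ≤ ρ →
      (Real.sin θ / (1 + Real.sin θ)) ^ n * (volume (closedBall a ε)).toReal
        ≤ (volume (closedBall a ε ∩ K)).toReal := by
  intro a ha ε hε hερ
  obtain ⟨ξ, hξ, hconeK⟩ := hcone a ha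
  have hsin : 0 < Real.sin θ :=
    Real.sin_pos_of_pos_of_lt_pi hθ.1 (hθ.2.trans (by linarith [Real.pi_pos]))
  set h := ε / (1 + Real.sin θ)
  have hh : 0 ≤ h := by positivity
  have hhε : h * (1 + Real.sin θ) = ε := div_mul_cancel₀ ε (by positivity)
  have hradius : (Real.sin θ / (1 + Real.sin θ)) * ε = h * Real.sin θ := by ring
  have hball : closedBall (a + h • ξ) (h * Real.sin θ) ⊆ closedBall a ε ∩ K := by
    refine Set.subset_inter (closedBall_subset_closedBall' ?_) ?_
    · rw [dist_self_add_left, norm_smul, hξ, Real.norm_eq_abs, abs_of_nonneg hh]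
      linarith
    · exact (closedBall_subset_finiteCone hξ hh (hhε.trans_le hερ)).trans hconeK
  calc (Real.sin θ / (1 + Real.sin θ)) ^ n * (volume (closedBall a ε)).toReal
      = (volume (closedBall (a + h • ξ) (h * Real.sin θ))).toReal := by
        rw [← hradius, Measure.addHaar_closedBall_mul _ _ (by positivity) hε.le,
          Measure.addHaar_closedBall_center _ a, finrank_euclideanSpace_fin, ENNReal.toReal_mul,
          ENNReal.toReal_ofReal (by positivity)]
    _ ≤ (volume (closedBall a ε ∩ K)).toReal :=
        ENNReal.toReal_mono (measure_ne_top_of_subset Set.inter_subset_left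
          measure_closedBall_lt_top.ne) (measure_mono hball)

theorem interior_cone_condition_volume_bound (n : ℕ)
    (K : Set (EuclideanSpace ℝ (Fin n)))
    (θ ρ : ℝ) (hθ : θ ∈ Set.Ioo 0 (Real.pi / 2)) (hρ : 0 < ρ)
    (hcone : ∀ x ∈ K, ∃ ξ : EuclideanSpace ℝ (Fin n), ‖ξ‖ = 1 ∧
      {p : EuclideanSpace ℝ (Fin n) |
        ∃ y : EuclideanSpace ℝ (Fin n), ∃ lam : ℝ,
          ‖y‖ = 1 ∧ Real.cos θ ≤ ⟪y, ξ⟫ ∧ lam ∈ Set.Icc 0 ρ ∧ p = x + lam • y} ⊆ K) :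
    ∀ a ∈ K, ∀ ε : ℝ, 0 < ε → ε ≤ ρ →
      (Real.sin θ / (1 + Real.sin θ)) ^ n * (volume (closedBall a ε)).toReal
        ≤ (volume (closedBall a ε ∩ K)).toReal :=
  interior_cone_condition_volume_bound_general n K θ ρ hθ hcone
end

section
/- Let K ⊆ ℝⁿ be compact with squared diameter D(K), a ∈ K, σ > 0, and 0 < ε. With G_a(x) = (2πσ²)^{−n/2} exp(−‖x−a‖²/(2σ²)) and C the constant with ∫_K C·G_a dx = 1, if vol(K ∩ B_ε(a)) ≥ η εⁿ γₙ then ∫_K C‖x−a‖ G_a(x) dx ≤ ε + (n σ^{n+1} p(n) / (εⁿ η)) · e^{ε²/(2σ²)}, where p(n) = ∫_0^∞ tⁿ e^{−t²/2} dt. -/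
/-! The normalising constant of the Gaussian cancels. On `K ∩ closedBall a ε` the weight
`‖x - a‖` is at most `ε`; on the rest of `K` the integral is at most the first absolute moment of
the Gaussian over the whole space, which polar coordinates and the scaling `y = σ t` evaluate to
`n γₙ σ^(n+1) p(n)`. This bounds the unnormalised moment by `ε Z + n γₙ σ^(n+1) p(n)` with
`Z = ∫_K G_a`, and `Z ≥ e^(-ε²/(2σ²)) vol(K ∩ closedBall a ε) ≥ e^(-ε²/(2σ²)) η εⁿ γₙ`. -/

open MeasureTheory Metric Set Real

lemma integral_Ioi_pow_mul_exp_neg_sq_div (n : ℕ) {σ : ℝ} (hσ : 0 < σ) :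
    ∫ y in Ioi 0, y ^ n * exp (-y ^ 2 / (2 * σ ^ 2))
      = σ ^ (n + 1) * ∫ t in Ioi 0, t ^ n * exp (-t ^ 2 / 2) := by
  have h := integral_comp_mul_left_Ioi' (fun y => y ^ n * exp (-y ^ 2 / (2 * σ ^ 2))) 0 hσ
  rw [mul_zero, smul_eq_mul] at h
  rw [← h, pow_succ' σ n, mul_assoc, ← integral_const_mul (σ ^ n)]
  congr 1
  refine setIntegral_congr_fun measurableSet_Ioi fun t _ => ?_
  rw [show -(σ * t) ^ 2 / (2 * σ ^ 2) = -t ^ 2 / 2 by field_simp, mul_pow, mul_assoc]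

section GaussianMoment

variable {E : Type*} [NormedAddCommGroup E] [NormedSpace ℝ E] [FiniteDimensional ℝ E]
  [MeasurableSpace E] [BorelSpace E] (μ : Measure E) [μ.IsAddHaarMeasure]

lemma integrable_norm_mul_exp_neg_sq_div {σ : ℝ} (hσ : σ ≠ 0) :
    Integrable (fun x : E => ‖x‖ * exp (-‖x‖ ^ 2 / (2 * σ ^ 2))) μ := by
  rcases subsingleton_or_nontrivial E with hE | hE
  · simp [Subsingleton.elim _ (0 : E)]
  refine (integrable_fun_norm_addHaar μ (f := fun r => r * exp (-r ^ 2 / (2 * σ ^ 2)))).2 ?_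
  have hdim : 1 ≤ Module.finrank ℝ E := Module.finrank_pos
  have hs : (-1 : ℝ) < Module.finrank ℝ E := by
    linarith [Nat.cast_nonneg (α := ℝ) (Module.finrank ℝ E)]
  refine (integrableOn_rpow_mul_exp_neg_mul_sq (b := (2 * σ ^ 2)⁻¹) (by positivity)
    hs).congr_fun (fun y _ => ?_) measurableSet_Ioi
  dsimp only
  rw [rpow_natCast, smul_eq_mul, ← mul_assoc, ← pow_succ, Nat.sub_add_cancel hdim]
  congr 2
  ring

lemma integral_norm_mul_exp_neg_sq_div {σ : ℝ} (hσ : 0 < σ) :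
    ∫ x, ‖x‖ * exp (-‖x‖ ^ 2 / (2 * σ ^ 2)) ∂μ
      = Module.finrank ℝ E * μ.real (ball 0 1) * σ ^ (Module.finrank ℝ E + 1)
          * ∫ t in Ioi 0, t ^ Module.finrank ℝ E * exp (-t ^ 2 / 2) := by
  rcases subsingleton_or_nontrivial E with hE | hE
  · simp [Subsingleton.elim _ (0 : E), Module.finrank_zero_of_subsingleton]
  have hdim : 1 ≤ Module.finrank ℝ E := Module.finrank_pos
  rw [integral_fun_norm_addHaar μ (fun r => r * exp (-r ^ 2 / (2 * σ ^ 2))), nsmul_eq_mul,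
    smul_eq_mul, mul_assoc _ (σ ^ _), ← integral_Ioi_pow_mul_exp_neg_sq_div _ hσ]
  simp only [smul_eq_mul, ← mul_assoc, ← pow_succ, Nat.sub_add_cancel hdim]

end GaussianMoment

section LocalizedMoment

variable {E : Type*} [NormedAddCommGroup E] [MeasurableSpace E] [OpensMeasurableSpace E]
  {μ : Measure E}

lemma setIntegral_norm_sub_mul_le_mul_add_integral {K : Set E} (hK : MeasurableSet K) {g : E → ℝ} (hg : 0 ≤ g)
    (hgK : IntegrableOn g K μ) (a : E) {ε : ℝ} (hε : 0 ≤ ε)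
    (hint : Integrable (fun x => ‖x - a‖ * g x) μ) :
    ∫ x in K, ‖x - a‖ * g x ∂μ ≤ ε * ∫ x in K, g x ∂μ + ∫ x, ‖x - a‖ * g x ∂μ := by
  rw [← integral_inter_add_sdiff measurableSet_closedBall hint.integrableOn]
  gcongr ?_ + ?_
  · calc ∫ x in K ∩ closedBall a ε, ‖x - a‖ * g x ∂μ
        ≤ ∫ x in K ∩ closedBall a ε, ε * g x ∂μ :=
          setIntegral_mono_on hint.integrableOn ((hgK.mono_set inter_subset_left).const_mul ε)
            (hK.inter measurableSet_closedBall) fun x hx =>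
              mul_le_mul_of_nonneg_right (mem_closedBall_iff_norm.mp hx.2) (hg x)
      _ ≤ ε * ∫ x in K, g x ∂μ := by
          rw [integral_const_mul]
          exact mul_le_mul_of_nonneg_left
            (setIntegral_mono_set hgK (.of_forall hg) inter_subset_left.eventuallyLE) hε
  · exact setIntegral_le_integral hint (.of_forall fun x => mul_nonneg (norm_nonneg _) (hg x))

lemma exp_mul_measureReal_le_setIntegral_exp [IsFiniteMeasureOnCompacts μ] {K : Set E}
    (hK : IsCompact K) (a : E) (ε : ℝ) {s : ℝ} (hs : 0 ≤ s) :
    exp (-ε ^ 2 / s) * μ.real (K ∩ closedBall a ε) ≤ ∫ x in K, exp (-‖x - a‖ ^ 2 / s) ∂μ := by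
  have hint : IntegrableOn (fun x => exp (-‖x - a‖ ^ 2 / s)) K μ :=
    (by fun_prop : Continuous _).continuousOn.integrableOn_compact hK
  calc exp (-ε ^ 2 / s) * μ.real (K ∩ closedBall a ε)
      ≤ ∫ x in K ∩ closedBall a ε, exp (-‖x - a‖ ^ 2 / s) ∂μ := by
        rw [mul_comm, ← smul_eq_mul]
        refine setIntegral_ge_of_const_le (hK.measurableSet.inter measurableSet_closedBall)
          ((measure_mono inter_subset_left).trans_lt hK.measure_lt_top).ne
          (fun x hx => ?_) (hint.mono_set inter_subset_left)
        gcongr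
        exact mem_closedBall_iff_norm.mp hx.2
    _ ≤ ∫ x in K, exp (-‖x - a‖ ^ 2 / s) ∂μ :=
        setIntegral_mono_set hint (.of_forall fun _ => (exp_pos _).le)
          inter_subset_left.eventuallyLE

end LocalizedMoment

lemma setIntegral_inv_setIntegral_const_mul {α : Type*} [MeasurableSpace α] (μ : Measure α)
    (s : Set α) {c : ℝ} (hc : c ≠ 0) (f h : α → ℝ) :
    ∫ x in s, (∫ y in s, c * f y ∂μ)⁻¹ * h x * (c * f x) ∂μ
      = (∫ y in s, f y ∂μ)⁻¹ * ∫ x in s, h x * f x ∂μ := by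
  have hpt : ∀ x, (∫ y in s, c * f y ∂μ)⁻¹ * h x * (c * f x)
      = (∫ y in s, f y ∂μ)⁻¹ * (h x * f x) := fun x => by
    rw [integral_const_mul]
    field_simp
  simp_rw [hpt]
  exact integral_const_mul _ _

lemma inv_mul_le_add_div_of_le {Z J I L ε : ℝ} (hL : 0 < L) (hLZ : L ≤ Z) (hI : 0 ≤ I)
    (hJ : J ≤ ε * Z + I) : Z⁻¹ * J ≤ ε + I / L := by
  have hZ : 0 < Z := hL.trans_le hLZ
  calc Z⁻¹ * J ≤ Z⁻¹ * (ε * Z + I) := by gcongr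
    _ = ε + I / Z := by field_simp
    _ ≤ ε + I / L := by gcongr

theorem gaussian_distance_moment_bound_general (n : ℕ)
    (K : Set (EuclideanSpace ℝ (Fin n))) (hK : IsCompact K)
    (a : EuclideanSpace ℝ (Fin n))
    (σ ε η : ℝ) (hσ : 0 < σ) (hε : 0 < ε) (hη : 0 < η)
    (hvol : η * ε ^ n * (volume (closedBall (0 : EuclideanSpace ℝ (Fin n)) 1)).toReal
      ≤ (volume (K ∩ closedBall a ε)).toReal) :
    ∫ x in K,
        (∫ y in K, (2 * Real.pi * σ ^ 2) ^ (-(n : ℝ) / 2)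
            * Real.exp (-‖y - a‖ ^ 2 / (2 * σ ^ 2)))⁻¹
          * ‖x - a‖ * ((2 * Real.pi * σ ^ 2) ^ (-(n : ℝ) / 2)
            * Real.exp (-‖x - a‖ ^ 2 / (2 * σ ^ 2)))
      ≤ ε + ((n : ℝ) * σ ^ (n + 1)
            * (∫ t in Set.Ioi (0 : ℝ), t ^ n * Real.exp (-t ^ 2 / 2)) / (ε ^ n * η))
          * Real.exp (ε ^ 2 / (2 * σ ^ 2)) := by
  rw [setIntegral_inv_setIntegral_const_mul _ _ (rpow_pos_of_pos (by positivity) _).ne']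
  set Z := ∫ y in K, exp (-‖y - a‖ ^ 2 / (2 * σ ^ 2))
  set γ := (volume (closedBall (0 : EuclideanSpace ℝ (Fin n)) 1)).toReal
  set p := ∫ t in Ioi (0 : ℝ), t ^ n * exp (-t ^ 2 / 2)
  have hγ : 0 < γ := ENNReal.toReal_pos (measure_closedBall_pos volume _ one_pos).ne'
    measure_closedBall_lt_top.ne
  have hp : 0 ≤ p := setIntegral_nonneg measurableSet_Ioi fun t (ht : 0 < t) => by positivity
  have hint := (integrable_norm_mul_exp_neg_sq_div volume hσ.ne').comp_sub_right a
  have hmoment : ∫ x, ‖x - a‖ * exp (-‖x - a‖ ^ 2 / (2 * σ ^ 2)) = n * γ * σ ^ (n + 1) * p := by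
    rw [integral_sub_right_eq_self (fun x => ‖x‖ * exp (-‖x‖ ^ 2 / (2 * σ ^ 2))),
      integral_norm_mul_exp_neg_sq_div volume hσ, finrank_euclideanSpace_fin, measureReal_def,
      ← Measure.addHaar_unitClosedBall_eq_addHaar_unitBall]
  have hZ : exp (-ε ^ 2 / (2 * σ ^ 2)) * (η * ε ^ n * γ) ≤ Z :=
    (mul_le_mul_of_nonneg_left hvol (exp_pos _).le).trans
      (exp_mul_measureReal_le_setIntegral_exp hK a ε (by positivity))
  have hsplit := setIntegral_norm_sub_mul_le_mul_add_integral hK.measurableSet (fun x => (exp_pos _).le)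
    ((continuous_exp.comp (by fun_prop)).continuousOn.integrableOn_compact hK) a hε.le hint
  rw [hmoment] at hsplit
  refine (inv_mul_le_add_div_of_le (by positivity) hZ (by positivity) hsplit).trans_eq ?_
  rw [neg_div, exp_neg]
  field_simp

theorem gaussian_distance_moment_bound (n : ℕ)
    (K : Set (EuclideanSpace ℝ (Fin n))) (hK : IsCompact K)
    (a : EuclideanSpace ℝ (Fin n)) (haK : a ∈ K)
    (σ ε η : ℝ) (hσ : 0 < σ) (hε : 0 < ε) (hη : 0 < η)
    (hvol : η * ε ^ n * (volume (closedBall (0 : EuclideanSpace ℝ (Fin n)) 1)).toReal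
      ≤ (volume (K ∩ closedBall a ε)).toReal) :
    ∫ x in K,
        (∫ y in K, (2 * Real.pi * σ ^ 2) ^ (-(n : ℝ) / 2)
            * Real.exp (-‖y - a‖ ^ 2 / (2 * σ ^ 2)))⁻¹
          * ‖x - a‖ * ((2 * Real.pi * σ ^ 2) ^ (-(n : ℝ) / 2)
            * Real.exp (-‖x - a‖ ^ 2 / (2 * σ ^ 2)))
      ≤ ε + ((n : ℝ) * σ ^ (n + 1)
            * (∫ t in Set.Ioi (0 : ℝ), t ^ n * Real.exp (-t ^ 2 / 2)) / (ε ^ n * η))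
          * Real.exp (ε ^ 2 / (2 * σ ^ 2)) :=
  gaussian_distance_moment_bound_general n K hK a σ ε η hσ hε hη hvol
end
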